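/- In a single-winner IRV election with candidate set containing W, suppose P' is obtained from P by adding k identical ballots ranking W first. Then in every round of the election on P' before W is elected or is the unique survivor, the set of eliminated candidates is the same as in the corresponding round on P, or W's vote total in that round is at least its total in P plus k. In particular, W's first-round vote total in P' equals its first-round total in P plus k. -/

import Mathlib

section IRV

variable {C : Type*} [DecidableEq C] [LinearOrder C]

/-- The highest-ranked candidate on ballot `b` who is still remaining. -/
def topChoice (rem : Finset C) (b : List C) : Option C := b.find? (· ∈ rem)

/-- The current vote total of candidate `c`: the number of ballots in `P` whose
highest-ranked remaining candidate is `c` (ballots ranking no remaining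
candidate are exhausted). -/
def score (P : List (List C)) (rem : Finset C) (c : C) : ℕ :=
  (P.filter (fun b => topChoice rem b = some c)).length

/-- The candidate eliminated this round: a remaining candidate with the fewest
current votes, with ties broken deterministically by the linear order on `C`. -/
def loser (P : List (List C)) (rem : Finset C) (h : rem.Nonempty) : C :=
  (rem.filter (fun c => ∀ d ∈ rem, score P rem c ≤ score P rem d)).min'
    (by
      obtain ⟨c, hc, hmin⟩ := rem.exists_min_image (score P rem) h
      exact ⟨c, Finset.mem_filter.mpr ⟨hc, hmin⟩⟩)

theorem loser_mem (P : List (List C)) (rem : Finset C) (h : rem.Nonempty) :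
    loser P rem h ∈ rem :=
  Finset.filter_subset _ _ (Finset.min'_mem _ _)

/-- The IRV winner among the remaining candidates: repeatedly eliminate the
remaining candidate with the fewest current votes (transferring their ballots to
the next remaining ranked candidate) until a single candidate remains. -/
noncomputable def irvWinner (P : List (List C)) (rem : Finset C) : Option C :=
  if h : 1 < rem.card then
    irvWinner P (rem.erase (loser P rem (Finset.card_pos.mp (by omega))))
  else rem.toList.head?
termination_by rem.card
decreasing_by exact Finset.card_erase_lt_of_mem (loser_mem _ _ _)

end IRV

section Rounds

variable {C : Type*} [DecidableEq C] [LinearOrder C]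

/-- The set of candidates remaining after `n` rounds of IRV elimination. -/
noncomputable def remAfter (P : List (List C)) (rem : Finset C) : ℕ → Finset C
  | 0 => rem
  | n + 1 =>
    let r := remAfter P rem n
    if h : 1 < r.card then r.erase (loser P r (Finset.card_pos.mp (by omega))) else r

end Rounds

/-!
While `W` remains, the `k` added ballots raise `W`'s tally by exactly `k` and leave every
other tally unchanged. Hence, in a round whose remaining set is the same for both elections,
the loser on `P` is also the loser on the augmented profile unless it is `W` itself: `W` only
gained votes, and ties are broken by the same order. By induction the remaining sets agree
until `W` is eliminated on `P`; after that `W` has no votes on `P`, while on the augmented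
profile it still holds the `k` added ballots.
-/

section Scores

variable {C : Type*} [DecidableEq C]

lemma topChoice_mem {rem : Finset C} {b : List C} {c : C} (h : topChoice rem b = some c) :
    c ∈ rem := by
  simpa using List.find?_some h

lemma topChoice_of_head?_eq {rem : Finset C} {b : List C} {W : C} (hb : b.head? = some W)
    (hW : W ∈ rem) : topChoice rem b = some W := by
  obtain ⟨t, rfl⟩ : ∃ t, b = W :: t := by
    cases b <;> simp_all
  simp [topChoice, hW]

lemma score_eq_zero_of_notMem (P : List (List C)) {rem : Finset C} {c : C} (hc : c ∉ rem) :
    score P rem c = 0 := by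
  simp only [score, List.length_eq_zero_iff, List.filter_eq_nil_iff, decide_eq_true_eq]
  exact fun _ _ h => hc (topChoice_mem h)

lemma score_append (P Q : List (List C)) (rem : Finset C) (c : C) :
    score (P ++ Q) rem c = score P rem c + score Q rem c := by
  simp [score, List.filter_append]

lemma score_replicate (k : ℕ) (b : List C) (rem : Finset C) (c : C) :
    score (List.replicate k b) rem c = if topChoice rem b = some c then k else 0 := by
  unfold score
  split_ifs with h <;> simp [h]

variable {P : List (List C)} {W : C} {b : List C}

lemma score_append_replicate_self (hb : b.head? = some W) (k : ℕ) {rem : Finset C}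
    (hW : W ∈ rem) : score (P ++ List.replicate k b) rem W = score P rem W + k := by
  rw [score_append, score_replicate, if_pos (topChoice_of_head?_eq hb hW)]

lemma score_append_replicate_of_ne (hb : b.head? = some W) (k : ℕ) {rem : Finset C}
    (hW : W ∈ rem) {c : C} (hc : c ≠ W) : score (P ++ List.replicate k b) rem c = score P rem c := by
  rw [score_append, score_replicate, topChoice_of_head?_eq hb hW, if_neg (by simpa using hc.symm),
    add_zero]

end Scores

section Elimination

variable {C : Type*} [DecidableEq C] [LinearOrder C]

noncomputable def eliminateLoser (P : List (List C)) (r : Finset C) : Finset C :=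
  if h : 1 < r.card then r.erase (loser P r (Finset.card_pos.mp (by omega))) else r

lemma remAfter_succ (P : List (List C)) (rem : Finset C) (n : ℕ) :
    remAfter P rem (n + 1) = eliminateLoser P (remAfter P rem n) := rfl

lemma eliminateLoser_subset (P : List (List C)) (r : Finset C) : eliminateLoser P r ⊆ r := by
  unfold eliminateLoser
  split
  · exact Finset.erase_subset _ _
  · exact subset_rfl

lemma le_score_loser {P : List (List C)} {rem : Finset C} (h : rem.Nonempty) {d : C}
    (hd : d ∈ rem) : score P rem (loser P rem h) ≤ score P rem d :=
  (Finset.mem_filter.mp (Finset.min'_mem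
    (rem.filter fun c => ∀ d ∈ rem, score P rem c ≤ score P rem d) _)).2 d hd

lemma loser_le {P : List (List C)} {rem : Finset C} (h : rem.Nonempty) {c : C} (hc : c ∈ rem)
    (hmin : ∀ d ∈ rem, score P rem c ≤ score P rem d) : loser P rem h ≤ c :=
  Finset.min'_le _ _ (Finset.mem_filter.mpr ⟨hc, hmin⟩)

lemma loser_eq_of_score_eq_of_ne {P Q : List (List C)} {rem : Finset C} {W : C}
    (hne : ∀ c ≠ W, score Q rem c = score P rem c) (hW : score P rem W ≤ score Q rem W)
    (h : rem.Nonempty) (hL : loser P rem h ≠ W) : loser Q rem h = loser P rem h := by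
  set L := loser P rem h
  set L' := loser Q rem h
  have hLmem : L ∈ rem := loser_mem P rem h
  have hL'mem : L' ∈ rem := loser_mem Q rem h
  have hL_min_Q : ∀ d ∈ rem, score Q rem L ≤ score Q rem d := by
    intro d hd
    rw [hne L hL]
    rcases eq_or_ne d W with rfl | hdW
    · exact (le_score_loser h hd).trans hW
    · exact hne d hdW ▸ le_score_loser h hd
  have hL'_le_L : score Q rem L' ≤ score Q rem L := le_score_loser h hLmem
  have hL'_min_P : ∀ d ∈ rem, score P rem L' ≤ score P rem d := by
    intro d hd
    refine le_trans ?_ (le_score_loser h hd)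
    rcases eq_or_ne L' W with hL'W | hL'W
    -- `W` would have to tie with `L` on `P`, and then the tie-break already preferred `L`.
    · rw [hL'W] at hL'_le_L ⊢
      rw [← hne L hL]
      exact hW.trans hL'_le_L
    · rw [← hne L' hL'W, ← hne L hL]
      exact hL'_le_L
  exact le_antisymm (loser_le h hLmem hL_min_Q) (loser_le h hL'mem hL'_min_P)

lemma eliminateLoser_append_replicate {P : List (List C)} {W : C} {b : List C}
    (hb : b.head? = some W) (k : ℕ) (r : Finset C) :
    eliminateLoser (P ++ List.replicate k b) r = eliminateLoser P r ∨
      W ∉ eliminateLoser P r := by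
  by_cases hW : W ∈ r
  swap
  · exact Or.inr fun h => hW (eliminateLoser_subset P r h)
  unfold eliminateLoser
  split_ifs with hcard
  · set h : r.Nonempty := Finset.card_pos.mp (by omega)
    by_cases hL : loser P r h = W
    · exact Or.inr (hL ▸ Finset.notMem_erase _ _)
    · left
      rw [loser_eq_of_score_eq_of_ne (fun c hc => score_append_replicate_of_ne hb k hW hc)
        (by rw [score_append_replicate_self hb k hW]; omega) h hL]
  · exact Or.inl rfl

theorem remAfter_append_replicate {P : List (List C)} {W : C} {b : List C}
    (hb : b.head? = some W) (k : ℕ) (rem : Finset C) (n : ℕ) :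
    remAfter (P ++ List.replicate k b) rem n = remAfter P rem n ∨ W ∉ remAfter P rem n := by
  induction n with
  | zero => exact Or.inl rfl
  | succ n ih =>
    rw [remAfter_succ, remAfter_succ]
    rcases ih with heq | hout
    · rw [heq]
      exact eliminateLoser_append_replicate hb k _
    · exact Or.inr fun h => hout (eliminateLoser_subset _ _ h)

end Elimination

/-- Let `P'` be obtained from `P` by adding `k` identical ballots ranking `W`
first.  Then in every round of the election on `P'` in which `W` is still
remaining and more than one candidate remains (i.e. before `W` is elected or is
the unique survivor), either the set of remaining (equivalently, eliminated)
candidates is the same as in the corresponding round on `P`, or `W`'s vote total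
in that round is at least its total in the corresponding round on `P` plus `k`.
In particular, `W`'s first-round total on `P'` equals its first-round total on
`P` plus `k`. -/
theorem irv_rounds_added_topW {C : Type*} [DecidableEq C] [LinearOrder C] [Fintype C]
    (P : List (List C)) (W : C) (b : List C) (hb : b.head? = some W) (k : ℕ) :
    (∀ n : ℕ, W ∈ remAfter (P ++ List.replicate k b) Finset.univ n →
        1 < (remAfter (P ++ List.replicate k b) Finset.univ n).card →
        remAfter (P ++ List.replicate k b) Finset.univ n = remAfter P Finset.univ n ∨
        score P (remAfter P Finset.univ n) W + k ≤
          score (P ++ List.replicate k b) (remAfter (P ++ List.replicate k b) Finset.univ n) W) ∧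
    score (P ++ List.replicate k b) Finset.univ W = score P Finset.univ W + k := by
  refine ⟨fun n hW _ => ?_, score_append_replicate_self hb k (Finset.mem_univ W)⟩
  rcases remAfter_append_replicate hb k Finset.univ n with heq | hout
  · exact Or.inl heq
  · right
    rw [score_eq_zero_of_notMem P hout, score_append_replicate_self hb k hW]
    omega
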